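/- arXiv:math-ph/0509028 — 2 statements merged into one kernel-verified Lean document; each statement's English description precedes it below -/
import Mathlib

section
/- Let ℋ be a separable Hilbert space, ρ a density matrix (positive trace-class operator with trace 1) with orthonormal eigenbasis (φₙ) and eigenvalues (pₙ), and f : [0,∞) → ℝ measurable. Let μ be a probability measure on the unit sphere of ℋ with density matrix ρ, i.e., ∫ |⟨φ,ψ⟩|² μ(dψ) = ⟨φ, ρφ⟩ for all φ. If ∑ₙ pₙ f(pₙ)² < ∞, then μ-almost every ψ satisfies ∑ₙ |f(pₙ)|² |⟨φₙ,ψ⟩|² < ∞ (i.e., ψ lies in the domain of f(ρ)). -/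
open MeasureTheory

/-- If μ is a probability measure on the unit sphere of ℋ with density matrix
ρ = ∑ₙ pₙ |φₙ⟩⟨φₙ| and ∑ₙ pₙ f(pₙ)² < ∞, then μ-almost every ψ lies in the
domain of f(ρ). -/
theorem stmt_11 {H : Type*} [NormedAddCommGroup H] [InnerProductSpace ℂ H]
    [MeasurableSpace H] [BorelSpace H]
    (φ : HilbertBasis ℕ ℂ H) (p : ℕ → ℝ) (hp : ∀ n, 0 ≤ p n) (hp1 : HasSum p 1)
    (f : ℝ → ℝ) (hf : Measurable f)
    (μ : Measure H) [IsProbabilityMeasure μ]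
    (hsphere : ∀ᵐ ψ ∂μ, ‖ψ‖ = 1)
    (hdm : ∀ n, ∫ ψ, ‖(inner ℂ (φ n) ψ : ℂ)‖ ^ 2 ∂μ = p n)
    (htr : Summable (fun n => p n * f (p n) ^ 2)) :
    ∀ᵐ ψ ∂μ, Summable (fun n => f (p n) ^ 2 * ‖(inner ℂ (φ n) ψ : ℂ)‖ ^ 2) := by
  have hcont : ∀ n : ℕ, Continuous fun ψ : H => ‖(inner ℂ (φ n) ψ : ℂ)‖ ^ 2 := by
    intro n
    exact ((innerSL ℂ (φ n)).continuous.norm.pow 2)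
  have hmeas : ∀ n : ℕ, Measurable fun ψ : H => ‖(inner ℂ (φ n) ψ : ℂ)‖ ^ 2 :=
    fun n => (hcont n).measurable
  -- each term is integrable (bounded by 1 on the sphere)
  have hint : ∀ n : ℕ, Integrable (fun ψ : H => ‖(inner ℂ (φ n) ψ : ℂ)‖ ^ 2) μ := by
    intro n
    refine Integrable.mono' (integrable_const 1) (hcont n).aestronglyMeasurable ?_
    filter_upwards [hsphere] with ψ hψ
    have h1 : ‖(inner ℂ (φ n) ψ : ℂ)‖ ≤ 1 := by
      calc ‖(inner ℂ (φ n) ψ : ℂ)‖ ≤ ‖φ n‖ * ‖ψ‖ := norm_inner_le_norm _ _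
        _ = 1 := by rw [hψ, φ.orthonormal.1 n]; ring
    have h0 : (0:ℝ) ≤ ‖(inner ℂ (φ n) ψ : ℂ)‖ := norm_nonneg _
    calc ‖‖(inner ℂ (φ n) ψ : ℂ)‖ ^ 2‖ = ‖(inner ℂ (φ n) ψ : ℂ)‖ ^ 2 := by
          rw [Real.norm_of_nonneg (by positivity)]
      _ ≤ 1 := by nlinarith
  set g : ℕ → H → ENNReal :=
    fun n ψ => ENNReal.ofReal (f (p n) ^ 2 * ‖(inner ℂ (φ n) ψ : ℂ)‖ ^ 2) with hg
  have hgint : ∀ n, ∫⁻ ψ, g n ψ ∂μ = ENNReal.ofReal (f (p n) ^ 2 * p n) := by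
    intro n
    rw [hg]
    rw [← ofReal_integral_eq_lintegral_ofReal ((hint n).const_mul _)
      (Filter.Eventually.of_forall fun ψ => by positivity)]
    rw [integral_const_mul, hdm n]
  have hkey : ∫⁻ ψ, ∑' n, g n ψ ∂μ < ⊤ := by
    rw [lintegral_tsum fun n => (((hmeas n).const_mul _).ennreal_ofReal).aemeasurable]
    have hsum : Summable fun n => f (p n) ^ 2 * p n := by
      simpa [mul_comm] using htr
    calc ∑' n, ∫⁻ ψ, g n ψ ∂μ = ∑' n, ENNReal.ofReal (f (p n) ^ 2 * p n) := by
          simp only [hgint]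
      _ = ENNReal.ofReal (∑' n, f (p n) ^ 2 * p n) :=
          (ENNReal.ofReal_tsum_of_nonneg (fun n => mul_nonneg (sq_nonneg _) (hp n)) hsum).symm
      _ < ⊤ := ENNReal.ofReal_lt_top
  have hae : ∀ᵐ ψ ∂μ, ∑' n, g n ψ < ⊤ := by
    exact ae_lt_top' (AEMeasurable.ennreal_tsum fun n =>
      (((hmeas n).const_mul _).ennreal_ofReal).aemeasurable) hkey.ne
  filter_upwards [hae] with ψ hψ
  have := ENNReal.summable_toReal hψ.ne
  refine this.congr fun n => ?_
  rw [hg]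
  exact ENNReal.toReal_ofReal (mul_nonneg (sq_nonneg _) (sq_nonneg _))
end

section
/- Let ℋ be a separable Hilbert space with orthonormal basis (φₙ), (Eₙ) real numbers with ∑ₙ e^{−β₀Eₙ} < ∞ for some β₀ > 0, and β > β₀. Set Z(β) = ∑ₙ e^{−βEₙ} and pₙ = e^{−βEₙ}/Z(β). Let μ be any probability measure on the unit sphere of ℋ with ∫|⟨φₙ,ψ⟩|² μ(dψ) = pₙ for all n. Then for every ℓ ∈ ℕ, μ-almost every ψ satisfies ∑ₙ Eₙ^{2ℓ} |⟨φₙ,ψ⟩|² < ∞. -/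
open MeasureTheory Filter Asymptotics

/-- Any probability measure on the unit sphere with density matrix ρ_β = e^{-βH}/Z
is concentrated on ∩_ℓ domain(H^ℓ). -/
theorem stmt_14 {H : Type*} [NormedAddCommGroup H] [InnerProductSpace ℂ H]
    [MeasurableSpace H] [BorelSpace H]
    (φ : HilbertBasis ℕ ℂ H) (E : ℕ → ℝ) (β₀ β : ℝ) (hβ₀ : 0 < β₀) (hβ : β₀ < β)
    (hZ₀ : Summable (fun n => Real.exp (-β₀ * E n)))
    (μ : Measure H) [IsProbabilityMeasure μ]
    (hsphere : ∀ᵐ ψ ∂μ, ‖ψ‖ = 1)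
    (hdm : ∀ n, ∫ ψ, ‖(inner ℂ (φ n) ψ : ℂ)‖ ^ 2 ∂μ
      = Real.exp (-β * E n) / (∑' m, Real.exp (-β * E m))) :
    ∀ ℓ : ℕ, ∀ᵐ ψ ∂μ, Summable (fun n => E n ^ (2 * ℓ) * ‖(inner ℂ (φ n) ψ : ℂ)‖ ^ 2) := by
  intro ℓ
  -- E n → ∞
  have hE_top : Tendsto E atTop atTop := by
    have h0 : Tendsto (fun n => Real.exp (-β₀ * E n)) atTop (nhds 0) :=
      hZ₀.tendsto_atTop_zero
    have h1 : Tendsto (fun n => -β₀ * E n) atTop atBot :=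
      Real.tendsto_exp_comp_nhds_zero.mp h0
    have h2 : Tendsto (fun n => β₀ * E n) atTop atTop :=
      tendsto_neg_atBot_iff.mp (by simpa [neg_mul] using h1)
    have h3 : Tendsto (fun n => (β₀ * E n) / β₀) atTop atTop :=
      h2.atTop_div_const hβ₀
    simpa [mul_div_assoc, mul_div_cancel_left₀, hβ₀.ne'] using h3
  -- eventual comparison
  have hev : ∀ᶠ n in atTop,
      E n ^ (2 * ℓ) * Real.exp (-β * E n) ≤ Real.exp (-β₀ * E n) := by
    have hc : 0 < β - β₀ := by linarith
    have hg : Tendsto (fun x : ℝ => x ^ (2 * ℓ) * Real.exp (-((β - β₀) * x)))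
        atTop (nhds 0) := by
      have := Real.tendsto_pow_mul_exp_neg_atTop_nhds_zero (2 * ℓ)
      have hsub : Tendsto (fun x : ℝ => (β - β₀) * x) atTop atTop :=
        Tendsto.const_mul_atTop hc tendsto_id
      have h := (this.comp hsub)
      have heq : (fun x : ℝ => ((β - β₀) * x) ^ (2 * ℓ) * Real.exp (-((β - β₀) * x)))
          = fun x => (β - β₀) ^ (2 * ℓ) * (x ^ (2 * ℓ) * Real.exp (-((β - β₀) * x))) := by
        funext x; rw [mul_pow]; ring
      have h' : Tendsto (fun x : ℝ => (β - β₀) ^ (2 * ℓ) *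
          (x ^ (2 * ℓ) * Real.exp (-((β - β₀) * x)))) atTop (nhds 0) := by
        rw [← heq]; exact h
      have hpos : (0:ℝ) < (β - β₀) ^ (2 * ℓ) := pow_pos hc _
      have := h'.const_mul ((β - β₀) ^ (2 * ℓ))⁻¹
      simpa [← mul_assoc, inv_mul_cancel₀ hpos.ne'] using this
    have hle : ∀ᶠ x : ℝ in atTop, x ^ (2 * ℓ) * Real.exp (-((β - β₀) * x)) ≤ 1 :=
      hg.eventually_le_const one_pos
    filter_upwards [hE_top.eventually hle] with n hn
    have : E n ^ (2 * ℓ) * Real.exp (-β * E n)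
        = (E n ^ (2 * ℓ) * Real.exp (-((β - β₀) * E n))) * Real.exp (-β₀ * E n) := by
      rw [mul_assoc, ← Real.exp_add]; ring_nf
    rw [this]
    have h2 : (0:ℝ) ≤ Real.exp (-β₀ * E n) := (Real.exp_pos _).le
    nlinarith
  -- summability of the weights
  have hsum : Summable (fun n => E n ^ (2 * ℓ) * Real.exp (-β * E n)) := by
    refine summable_of_isBigO hZ₀ ?_
    rw [Nat.cofinite_eq_atTop]
    refine IsBigO.of_bound 1 ?_
    filter_upwards [hev] with n hn
    have h1 : (0:ℝ) ≤ E n ^ (2 * ℓ) := (even_two_mul ℓ).pow_nonneg _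
    have h2 : (0:ℝ) < Real.exp (-β * E n) := Real.exp_pos _
    rw [Real.norm_of_nonneg (mul_nonneg ((even_two_mul ℓ).pow_nonneg _) (Real.exp_pos _).le),
      Real.norm_of_nonneg (Real.exp_pos _).le,
      one_mul]
    exact hn
  set Z := ∑' m, Real.exp (-β * E m) with hZdef
  have hsumP : Summable (fun n => E n ^ (2 * ℓ) * (Real.exp (-β * E n) / Z)) := by
    simpa [mul_div_assoc] using hsum.div_const Z
  -- measurability and integrability
  have hmeas : ∀ n, Measurable (fun ψ : H => ‖(inner ℂ (φ n) ψ : ℂ)‖ ^ 2) := fun n =>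
    ((Continuous.inner continuous_const continuous_id).norm.pow 2).measurable
  have hint : ∀ n, Integrable (fun ψ : H => ‖(inner ℂ (φ n) ψ : ℂ)‖ ^ 2) μ := by
    intro n
    refine (integrable_const (1:ℝ)).mono' (hmeas n).aestronglyMeasurable ?_
    filter_upwards [hsphere] with ψ hψ
    rw [Real.norm_of_nonneg (by positivity)]
    have h1 : ‖(inner ℂ (φ n) ψ : ℂ)‖ ≤ ‖φ n‖ * ‖ψ‖ := norm_inner_le_norm _ _
    have h2 : ‖φ n‖ = 1 := φ.orthonormal.1 n
    rw [h2, hψ, one_mul] at h1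
    nlinarith [norm_nonneg (inner ℂ (φ n) ψ : ℂ)]
  have hterm : ∀ n, ∫⁻ ψ, ENNReal.ofReal (E n ^ (2 * ℓ) * ‖(inner ℂ (φ n) ψ : ℂ)‖ ^ 2) ∂μ
      = ENNReal.ofReal (E n ^ (2 * ℓ) * (Real.exp (-β * E n) / Z)) := by
    intro n
    have hc : (0:ℝ) ≤ E n ^ (2 * ℓ) := (even_two_mul ℓ).pow_nonneg _
    simp_rw [ENNReal.ofReal_mul hc]
    rw [lintegral_const_mul _ ((hmeas n).ennreal_ofReal)]
    rw [← ofReal_integral_eq_lintegral_ofReal (hint n)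
      (Filter.Eventually.of_forall fun ψ => pow_nonneg (norm_nonneg _) 2)]
    rw [hdm n]
  have hmeasT : Measurable (fun ψ : H =>
      ∑' n, ENNReal.ofReal (E n ^ (2 * ℓ) * ‖(inner ℂ (φ n) ψ : ℂ)‖ ^ 2)) :=
    Measurable.ennreal_tsum fun n => ((hmeas n).const_mul _).ennreal_ofReal
  have key : ∫⁻ ψ, (∑' n, ENNReal.ofReal (E n ^ (2 * ℓ) * ‖(inner ℂ (φ n) ψ : ℂ)‖ ^ 2)) ∂μ
      ≠ ⊤ := by
    rw [lintegral_tsum fun n => (((hmeas n).const_mul _).ennreal_ofReal).aemeasurable]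
    simp_rw [hterm]
    rw [← ENNReal.ofReal_tsum_of_nonneg (fun n => mul_nonneg ((even_two_mul ℓ).pow_nonneg _) (div_nonneg (Real.exp_pos _).le (tsum_nonneg fun m => (Real.exp_pos _).le))) hsumP]
    exact ENNReal.ofReal_ne_top
  have hae := ae_lt_top hmeasT key
  filter_upwards [hae] with ψ hψ
  have hs := ENNReal.summable_toReal hψ.ne
  refine hs.congr fun n => ?_
  exact ENNReal.toReal_ofReal (mul_nonneg ((even_two_mul ℓ).pow_nonneg _) (by positivity))
end
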